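/- Let m be a real number with m ∉ {0, 1, 2}. For the function f(x,u,p,q,r) = r^m (real power, defined for r > 0), at every point (x,u,p,q,r) ∈ ℝ⁵ with r > 0 the Cartan invariants satisfy I₄ = (m(m−1)/6)·r^(m−2) and I₅ = −(3(m−2)/(m(m−1)))·r^(1−m); in particular I₄ ≠ 0, and if additionally m ≠ 2 then I₅ ≠ 0. -/

import Mathlib

noncomputable section

/-- Functions of the five jet variables `(x, u, p, q, r)`. -/
abbrev Jet5 := ℝ → ℝ → ℝ → ℝ → ℝ → ℝ

/-- Partial derivative `F_x`. -/
def pX (F : Jet5) (x u p q r : ℝ) : ℝ := deriv (fun t => F t u p q r) x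
/-- Partial derivative `F_u`. -/
def pU (F : Jet5) (x u p q r : ℝ) : ℝ := deriv (fun t => F x t p q r) u
/-- Partial derivative `F_p`. -/
def pP (F : Jet5) (x u p q r : ℝ) : ℝ := deriv (fun t => F x u t q r) p
/-- Partial derivative `F_q`. -/
def pQ (F : Jet5) (x u p q r : ℝ) : ℝ := deriv (fun t => F x u p t r) q
/-- Partial derivative `F_r`. -/
def pR (F : Jet5) (x u p q r : ℝ) : ℝ := deriv (fun t => F x u p q t) r

/-- Total derivative operator `D̂ₓF = F_x + p F_u + q F_p + r F_q + f F_r`. -/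
def Dhat (f F : Jet5) : Jet5 := fun x u p q r =>
  pX F x u p q r + p * pU F x u p q r + q * pP F x u p q r + r * pQ F x u p q r
    + f x u p q r * pR F x u p q r

/-- Cartan invariant `I₀ = −f_r`. -/
def I0 (f : Jet5) : Jet5 := fun x u p q r => - pR f x u p q r

/-- Cartan invariant `I₁ = (1/4)I₀² − (1/6)D̂ₓI₀`. -/
def I1 (f : Jet5) : Jet5 := fun x u p q r =>
  (1 / 4) * (I0 f x u p q r) ^ 2 - (1 / 6) * Dhat f (I0 f) x u p q r

/-- Cartan invariant `I₂ = −(1/2)D̂ₓI₀ − f_q`. -/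
def I2 (f : Jet5) : Jet5 := fun x u p q r =>
  -(1 / 2) * Dhat f (I0 f) x u p q r - pQ f x u p q r

/-- Cartan invariant `I₃ = −(1/8)(I₀)_r·I₀ + (1/4)(I₁)_r − (1/12)(I₂)_r`. -/
def I3 (f : Jet5) : Jet5 := fun x u p q r =>
  -(1 / 8) * pR (I0 f) x u p q r * I0 f x u p q r
    + (1 / 4) * pR (I1 f) x u p q r - (1 / 12) * pR (I2 f) x u p q r

/-- Cartan invariant `I₄ = −(1/6)(I₀)_r`. -/
def I4 (f : Jet5) : Jet5 := fun x u p q r => -(1 / 6) * pR (I0 f) x u p q r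

/-- Cartan invariant on the branch `I₄ ≠ 0`: `I₅ = −(1/2)(I₄)_r/I₄²`. -/
def I5 (f : Jet5) : Jet5 := fun x u p q r =>
  -(1 / 2) * pR (I4 f) x u p q r / (I4 f x u p q r) ^ 2

/-- Cartan invariant on the branch `I₄ ≠ 0`: `I₆ = −(3/2)I₀·I₄ − (I₂)_r − 6I₃`. -/
def I6 (f : Jet5) : Jet5 := fun x u p q r =>
  -(3 / 2) * I0 f x u p q r * I4 f x u p q r - pR (I2 f) x u p q r - 6 * I3 f x u p q r

/-- Cartan invariant on the branch `I₄ ≠ 0`: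
`I₈ = (I₆/I₄²)(D̂ₓI₄ − (I₄)_r f) − (1/I₄)D̂ₓI₆ + (3/4)I₀² − (1/2)I₀I₆/I₄
      + (3/10)I₂ + (1/3)I₆²/I₄² − (27/10)I₁`. -/
def I8 (f : Jet5) : Jet5 := fun x u p q r =>
  (I6 f x u p q r / (I4 f x u p q r) ^ 2)
      * (Dhat f (I4 f) x u p q r - pR (I4 f) x u p q r * f x u p q r)
    - (1 / I4 f x u p q r) * Dhat f (I6 f) x u p q r
    + (3 / 4) * (I0 f x u p q r) ^ 2
    - (1 / 2) * I0 f x u p q r * I6 f x u p q r / I4 f x u p q r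
    + (3 / 10) * I2 f x u p q r
    + (1 / 3) * (I6 f x u p q r) ^ 2 / (I4 f x u p q r) ^ 2
    - (27 / 10) * I1 f x u p q r


open Filter Topology

section PowerLaw

variable {x u p q : ℝ}

theorem pR_eq_of_eq_mul_rpow {F : Jet5} {c a r : ℝ}
    (hF : ∀ s, 0 < s → F x u p q s = c * s ^ a) (hr : 0 < r) :
    pR F x u p q r = c * (a * r ^ (a - 1)) := by
  -- Only the values near `r > 0` matter, so the junk values of `s ^ a` for `s ≤ 0` play no role.
  have hloc : (fun s => F x u p q s) =ᶠ[𝓝 r] fun s => c * s ^ a :=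
    eventually_of_mem (Ioi_mem_nhds hr) hF
  rw [pR, hloc.deriv_eq]
  exact ((Real.hasDerivAt_rpow_const (Or.inl hr.ne')).const_mul c).deriv

theorem I0_rpow (m : ℝ) {s : ℝ} (hs : 0 < s) :
    I0 (fun _ _ _ _ r => r ^ m) x u p q s = -m * s ^ (m - 1) := by
  rw [I0, pR_eq_of_eq_mul_rpow (c := 1) (fun s _ => (one_mul _).symm) hs]
  ring

theorem I4_rpow (m : ℝ) {s : ℝ} (hs : 0 < s) :
    I4 (fun _ _ _ _ r => r ^ m) x u p q s = m * (m - 1) / 6 * s ^ (m - 2) := by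
  rw [I4, pR_eq_of_eq_mul_rpow (fun s hs => I0_rpow m hs) hs, sub_sub, one_add_one_eq_two]
  ring

theorem I5_rpow {m : ℝ} (hm0 : m ≠ 0) (hm1 : m ≠ 1) {r : ℝ} (hr : 0 < r) :
    I5 (fun _ _ _ _ r => r ^ m) x u p q r = -(3 * (m - 2) / (m * (m - 1))) * r ^ (1 - m) := by
  have hm1' : m - 1 ≠ 0 := sub_ne_zero.mpr hm1
  have hpow : r ^ (m - 2 - 1) = r ^ (1 - m) * (r ^ (m - 2)) ^ 2 := by
    rw [sq, ← Real.rpow_add hr, ← Real.rpow_add hr]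
    ring_nf
  have hr2 : r ^ (m - 2) ≠ 0 := (Real.rpow_pos_of_pos hr _).ne'
  rw [I5, pR_eq_of_eq_mul_rpow (fun s hs => I4_rpow m hs) hr, I4_rpow m hr, hpow]
  field_simp
  ring

end PowerLaw

theorem stmt_15 (m : ℝ) (hm0 : m ≠ 0) (hm1 : m ≠ 1)
    (f : Jet5) (hf : f = fun _ _ _ _ r => r ^ m) :
    ∀ x u p q r : ℝ, 0 < r →
      I4 f x u p q r = (m * (m - 1) / 6) * r ^ (m - 2) ∧
      I5 f x u p q r = -(3 * (m - 2) / (m * (m - 1))) * r ^ (1 - m) ∧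
      I4 f x u p q r ≠ 0 ∧
      (m ≠ 2 → I5 f x u p q r ≠ 0) := by
  subst hf
  intro x u p q r hr
  have hpow (a : ℝ) : r ^ a ≠ 0 := (Real.rpow_pos_of_pos hr a).ne'
  have hm1' : m - 1 ≠ 0 := sub_ne_zero.mpr hm1
  refine ⟨I4_rpow m hr, I5_rpow hm0 hm1 hr, ?_, fun hm2 => ?_⟩
  · rw [I4_rpow m hr]
    exact mul_ne_zero (div_ne_zero (mul_ne_zero hm0 hm1') (by norm_num)) (hpow _)
  · rw [I5_rpow hm0 hm1 hr]
    exact mul_ne_zero (neg_ne_zero.mpr (div_ne_zero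
      (mul_ne_zero (by norm_num) (sub_ne_zero.mpr hm2)) (mul_ne_zero hm0 hm1'))) (hpow _)
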